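/- arXiv:1504.04368 — 2 statements merged into one kernel-verified Lean document; each statement's English description precedes it below -/
import Mathlib

section
/- Let X be a Banach space with a Schauder basis (eₙ) with biorthogonal functionals (eₙ*). If for every N and every x the greedy approximation satisfies ‖G_N(x)‖ ≤ ‖x‖, then for all finitely supported vectors x and y with disjoint supports, ‖x‖ ≤ ‖x + y‖. -/
open Finset Filter

/-- A Schauder basis of a real Banach space, given with its biorthogonal functionals. -/
structure SchauderBasis' (X : Type*) [NormedAddCommGroup X] [NormedSpace ℝ X] where
  e : ℕ → X
  coord : ℕ → X →L[ℝ] ℝ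
  biorth : ∀ m n, coord m (e n) = if m = n then 1 else 0
  expansion : ∀ x : X, Tendsto (fun N => ∑ n ∈ Finset.range N, coord n x • e n)
    atTop (nhds x)

/-- `Λ` is an admissible greedy set for `x`: every coefficient inside `Λ`
dominates every coefficient outside. -/
def IsGreedySet {X : Type*} [NormedAddCommGroup X] [NormedSpace ℝ X]
    (B : SchauderBasis' X) (x : X) (Λ : Finset ℕ) : Prop :=
  ∀ j ∈ Λ, ∀ k ∉ Λ, |B.coord k x| ≤ |B.coord j x|

/-- The corresponding greedy approximation `G_N(x)` with greedy set `Λ`. -/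
noncomputable def greedySum {X : Type*} [NormedAddCommGroup X] [NormedSpace ℝ X]
    (B : SchauderBasis' X) (x : X) (Λ : Finset ℕ) : X :=
  ∑ j ∈ Λ, B.coord j x • B.e j

/-- The basis is semi-normalized. -/
def SemiNormalized {X : Type*} [NormedAddCommGroup X] [NormedSpace ℝ X]
    (B : SchauderBasis' X) : Prop :=
  ∃ c C : ℝ, 0 < c ∧ ∀ n, c ≤ ‖B.e n‖ ∧ ‖B.e n‖ ≤ C

/-!
A small perturbation `x + t • y` of `x` still has the nonzero coefficients of `x` as its
largest ones, so `x` is a greedy approximation of it and `‖x‖ ≤ ‖x + t • y‖`.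
Convexity of `s ↦ ‖x + s • y‖` then carries this from `s = t` to `s = 1`.
-/

open Topology

theorem norm_le_norm_add_of_norm_le_norm_add_smul {E : Type*} [SeminormedAddCommGroup E]
    [NormedSpace ℝ E] {x y : E} {t : ℝ} (ht0 : 0 < t) (ht1 : t ≤ 1)
    (h : ‖x‖ ≤ ‖x + t • y‖) : ‖x‖ ≤ ‖x + y‖ := by
  have hconv : ‖x + t • y‖ ≤ (1 - t) * ‖x‖ + t * ‖x + y‖ := calc
    ‖x + t • y‖ = ‖(1 - t) • x + t • (x + y)‖ := by congr 1; module
    _ ≤ ‖(1 - t) • x‖ + ‖t • (x + y)‖ := norm_add_le _ _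
    _ = (1 - t) * ‖x‖ + t * ‖x + y‖ := by
      rw [norm_smul_of_nonneg (by linarith), norm_smul_of_nonneg ht0.le]
  exact le_of_mul_le_mul_left (by linarith) ht0

theorem eventually_forall_mul_abs_le {ι κ : Type*} (S : Finset ι) (T : Finset κ)
    (a : ι → ℝ) (b : κ → ℝ) :
    ∀ᶠ t in 𝓝 (0 : ℝ), ∀ j ∈ S, a j ≠ 0 → ∀ k ∈ T, t * |b k| ≤ |a j| := by
  refine (eventually_all_finset S).2 fun j _ => ?_
  by_cases ha : a j = 0
  · exact Eventually.of_forall fun _ h => absurd ha h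
  refine ((eventually_all_finset T).2 fun k _ => ?_).mono fun _ h _ => h
  have hlim : Tendsto (fun t : ℝ => t * |b k|) (𝓝 0) (𝓝 0) := by
    simpa using (tendsto_id (x := 𝓝 (0 : ℝ))).mul_const |b k|
  exact hlim.eventually (ge_mem_nhds (abs_pos.2 ha))

namespace SchauderBasis'

variable {X : Type*} [NormedAddCommGroup X] [NormedSpace ℝ X] (B : SchauderBasis' X)

theorem coord_sum_smul (S : Finset ℕ) (a : ℕ → ℝ) (k : ℕ) :
    B.coord k (∑ n ∈ S, a n • B.e n) = if k ∈ S then a k else 0 := by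
  simp only [map_sum, map_smul, B.biorth, smul_eq_mul, mul_ite, mul_one, mul_zero,
    Finset.sum_ite_eq]

variable {S T : Finset ℕ}

theorem coord_sum_add_smul_sum (hST : Disjoint S T) (a b : ℕ → ℝ) (t : ℝ) (k : ℕ) :
    B.coord k (∑ n ∈ S, a n • B.e n + t • ∑ n ∈ T, b n • B.e n) =
      if k ∈ S then a k else if k ∈ T then t * b k else 0 := by
  rw [map_add, map_smul, coord_sum_smul, coord_sum_smul, smul_eq_mul]
  by_cases hkS : k ∈ S
  · simp [hkS, Finset.disjoint_left.1 hST hkS]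
  · by_cases hkT : k ∈ T <;> simp [hkS, hkT]

theorem isGreedySet_sum_add_smul_sum (hST : Disjoint S T) (a b : ℕ → ℝ) {t : ℝ}
    (ht : 0 ≤ t) (hsmall : ∀ j ∈ S, a j ≠ 0 → ∀ k ∈ T, t * |b k| ≤ |a j|) :
    IsGreedySet B (∑ n ∈ S, a n • B.e n + t • ∑ n ∈ T, b n • B.e n)
      {n ∈ S | a n ≠ 0} := by
  intro j hj k hk
  obtain ⟨hjS, haj⟩ := Finset.mem_filter.1 hj
  rw [B.coord_sum_add_smul_sum hST, B.coord_sum_add_smul_sum hST, if_pos hjS]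
  by_cases hkS : k ∈ S
  · have hak : a k = 0 := by simpa [hkS] using hk
    simp [hkS, hak]
  · by_cases hkT : k ∈ T
    · simpa [hkS, hkT, abs_mul, abs_of_nonneg ht] using hsmall j hjS haj k hkT
    · simp [hkS, hkT]

theorem greedySum_sum_add_smul_sum (hST : Disjoint S T) (a b : ℕ → ℝ) (t : ℝ) :
    greedySum B (∑ n ∈ S, a n • B.e n + t • ∑ n ∈ T, b n • B.e n) {n ∈ S | a n ≠ 0} =
      ∑ n ∈ S, a n • B.e n := by
  calc greedySum B _ {n ∈ S | a n ≠ 0}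
      = ∑ n ∈ S with a n ≠ 0, a n • B.e n := Finset.sum_congr rfl fun j hj => by
        rw [B.coord_sum_add_smul_sum hST, if_pos (Finset.mem_filter.1 hj).1]
    _ = ∑ n ∈ S, a n • B.e n :=
        Finset.sum_filter_of_ne fun n _ h ha => h (by rw [ha, zero_smul])

end SchauderBasis'

theorem disjoint_support_norm_le_of_Cw_one_general {X : Type*} [NormedAddCommGroup X]
    [NormedSpace ℝ X] (B : SchauderBasis' X)
    (hG : ∀ (x : X) (Λ : Finset ℕ), IsGreedySet B x Λ → ‖greedySum B x Λ‖ ≤ ‖x‖)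
    (S T : Finset ℕ) (hST : Disjoint S T) (a b : ℕ → ℝ)
    (x y : X) (hx : x = ∑ n ∈ S, a n • B.e n) (hy : y = ∑ n ∈ T, b n • B.e n) :
    ‖x‖ ≤ ‖x + y‖ := by
  subst hx hy
  obtain ⟨t, hsmall, ht0, ht1⟩ := ((eventually_forall_mul_abs_le S T a b).filter_mono
    nhdsWithin_le_nhds |>.and (Ioc_mem_nhdsGT one_pos)).exists
  refine norm_le_norm_add_of_norm_le_norm_add_smul ht0 ht1 ?_
  calc ‖∑ n ∈ S, a n • B.e n‖
      = ‖greedySum B (∑ n ∈ S, a n • B.e n + t • ∑ n ∈ T, b n • B.e n)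
          {n ∈ S | a n ≠ 0}‖ := by rw [B.greedySum_sum_add_smul_sum hST]
    _ ≤ _ := hG _ _ (B.isGreedySet_sum_add_smul_sum hST a b ht0.le hsmall)

theorem disjoint_support_norm_le_of_Cw_one {X : Type*} [NormedAddCommGroup X]
    [NormedSpace ℝ X] [CompleteSpace X] (B : SchauderBasis' X)
    (hG : ∀ (x : X) (Λ : Finset ℕ), IsGreedySet B x Λ → ‖greedySum B x Λ‖ ≤ ‖x‖)
    (S T : Finset ℕ) (hST : Disjoint S T) (a b : ℕ → ℝ)
    (x y : X) (hx : x = ∑ n ∈ S, a n • B.e n) (hy : y = ∑ n ∈ T, b n • B.e n) :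
    ‖x‖ ≤ ‖x + y‖ :=
  disjoint_support_norm_le_of_Cw_one_general B hG S T hST a b x y hx hy
end

section
/- Let H be a Hilbert space with a semi-normalized Schauder basis (eₙ) satisfying ‖G_N(x)‖ ≤ ‖x‖ for all x, N, and admissible greedy sets (C_w = 1). Then the basis is orthogonal: ⟨e_i, e_j⟩ = 0 for all i ≠ j. -/
open Finset Filter

/-- A Schauder basis over a real or complex field, with biorthogonal functionals. -/
structure SchauderBasisK (𝕜 : Type*) [RCLike 𝕜] (X : Type*) [NormedAddCommGroup X]
    [NormedSpace 𝕜 X] where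
  e : ℕ → X
  coord : ℕ → X →L[𝕜] 𝕜
  biorth : ∀ m n, coord m (e n) = if m = n then 1 else 0
  expansion : ∀ x : X, Tendsto (fun N => ∑ n ∈ Finset.range N, coord n x • e n)
    atTop (nhds x)

def IsGreedySetK {𝕜 : Type*} [RCLike 𝕜] {X : Type*} [NormedAddCommGroup X]
    [NormedSpace 𝕜 X] (B : SchauderBasisK 𝕜 X) (x : X) (Λ : Finset ℕ) : Prop :=
  ∀ j ∈ Λ, ∀ k ∉ Λ, ‖B.coord k x‖ ≤ ‖B.coord j x‖

noncomputable def greedySumK {𝕜 : Type*} [RCLike 𝕜] {X : Type*} [NormedAddCommGroup X]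
    [NormedSpace 𝕜 X] (B : SchauderBasisK 𝕜 X) (x : X) (Λ : Finset ℕ) : X :=
  ∑ j ∈ Λ, B.coord j x • B.e j

def SemiNormalizedK {𝕜 : Type*} [RCLike 𝕜] {X : Type*} [NormedAddCommGroup X]
    [NormedSpace 𝕜 X] (B : SchauderBasisK 𝕜 X) : Prop :=
  ∃ c C : ℝ, 0 < c ∧ ∀ n, c ≤ ‖B.e n‖ ∧ ‖B.e n‖ ≤ C

/-!
Take `x = e_i + t e_j` with `‖t‖ ≥ 1`. Its only nonzero coefficients are `1` at `i` and `t` at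
`j`, so `{j}` is a greedy set and the hypothesis gives `‖t e_j‖ ≤ ‖e_i + t e_j‖`. Expanding the
square, `0 ≤ ‖e_i‖² + 2 Re (t ⟪e_i, e_j⟫)`; rotating `t` so that `t ⟪e_i, e_j⟫ = -‖t‖ ‖⟪e_i, e_j⟫‖`
and letting `‖t‖ → ∞` forces `⟪e_i, e_j⟫ = 0`.
-/

lemma eq_zero_of_forall_one_le_mul_le {b c : ℝ} (hb : 0 ≤ b) (h : ∀ s, 1 ≤ s → s * b ≤ c) :
    b = 0 := by
  by_contra hb0
  have hb' : 0 < b := lt_of_le_of_ne hb (Ne.symm hb0)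
  obtain ⟨s, hs1, hsc⟩ := ((eventually_ge_atTop 1).and
    ((tendsto_id.atTop_mul_const hb').eventually_gt_atTop c)).exists
  exact (h s hs1).not_gt hsc

lemma RCLike.exists_norm_eq_one_mul_eq_norm {𝕜 : Type*} [RCLike 𝕜] (a : 𝕜) :
    ∃ ω : 𝕜, ‖ω‖ = 1 ∧ ω * a = ‖a‖ := by
  rcases eq_or_ne a 0 with rfl | ha
  · exact ⟨1, norm_one, by simp⟩
  · have ha' : (‖a‖ : 𝕜) ≠ 0 := RCLike.ofReal_ne_zero.mpr (norm_ne_zero_iff.mpr ha)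
    refine ⟨starRingEnd 𝕜 a / ‖a‖, ?_, ?_⟩
    · rw [norm_div, RCLike.norm_conj, RCLike.norm_ofReal, abs_norm,
        div_self (norm_ne_zero_iff.mpr ha)]
    · rw [div_mul_eq_mul_div, RCLike.conj_mul, sq, mul_div_cancel_right₀ _ ha']

lemma inner_eq_zero_of_norm_smul_le_norm_add_smul {𝕜 E : Type*} [RCLike 𝕜]
    [NormedAddCommGroup E] [InnerProductSpace 𝕜 E] {u v : E}
    (h : ∀ t : 𝕜, 1 ≤ ‖t‖ → ‖t • v‖ ≤ ‖u + t • v‖) : inner 𝕜 u v = 0 := by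
  obtain ⟨ω, hω, hωa⟩ := RCLike.exists_norm_eq_one_mul_eq_norm (inner 𝕜 u v)
  rw [← norm_eq_zero]
  refine eq_zero_of_forall_one_le_mul_le (by positivity) (c := ‖u‖ ^ 2 / 2) fun s hs => ?_
  set t : 𝕜 := -(s : 𝕜) * ω
  have hts : ‖t‖ = s := by simp [t, hω, abs_of_pos (zero_lt_one.trans_le hs)]
  have hre : RCLike.re (inner 𝕜 u (t • v)) = -(s * ‖inner 𝕜 u v‖) := by
    rw [inner_smul_right, mul_assoc, hωa, neg_mul, ← RCLike.ofReal_mul, ← RCLike.ofReal_neg,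
      RCLike.ofReal_re]
  have hsq : ‖t • v‖ ^ 2 ≤ ‖u + t • v‖ ^ 2 := by
    gcongr
    exact h t (hts ▸ hs)
  rw [norm_add_sq (𝕜 := 𝕜), hre] at hsq
  linarith

section Greedy

variable {𝕜 X : Type*} [RCLike 𝕜] [NormedAddCommGroup X] [NormedSpace 𝕜 X]
  (B : SchauderBasisK 𝕜 X) {i j : ℕ}

lemma SchauderBasisK.coord_add_smul_of_ne (t : 𝕜) {k : ℕ} (hk : k ≠ j) :
    B.coord k (B.e i + t • B.e j) = if k = i then 1 else 0 := by
  simp [B.biorth, hk]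

lemma SchauderBasisK.coord_add_smul_self (hij : i ≠ j) (t : 𝕜) :
    B.coord j (B.e i + t • B.e j) = t := by
  simp [B.biorth, hij.symm]

lemma greedySumK_singleton_add_smul (hij : i ≠ j) (t : 𝕜) :
    greedySumK B (B.e i + t • B.e j) {j} = t • B.e j := by
  rw [greedySumK, sum_singleton, B.coord_add_smul_self hij]

lemma isGreedySetK_singleton_add_smul (hij : i ≠ j) {t : 𝕜} (ht : 1 ≤ ‖t‖) :
    IsGreedySetK B (B.e i + t • B.e j) {j} := by
  intro j' hj' k hk
  rw [mem_singleton] at hj' hk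
  subst hj'
  rw [B.coord_add_smul_of_ne t hk, B.coord_add_smul_self hij]
  split_ifs <;> simp [ht]

end Greedy

theorem basis_orthogonal_of_Cw_one_general {𝕜 : Type*} [RCLike 𝕜] {H : Type*}
    [NormedAddCommGroup H] [InnerProductSpace 𝕜 H]
    (B : SchauderBasisK 𝕜 H)
    (hG : ∀ (x : H) (Λ : Finset ℕ), IsGreedySetK B x Λ → ‖greedySumK B x Λ‖ ≤ ‖x‖) :
    ∀ i j, i ≠ j → (inner 𝕜 (B.e i) (B.e j) : 𝕜) = 0 := by
  intro i j hij
  refine inner_eq_zero_of_norm_smul_le_norm_add_smul fun t ht => ?_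
  simpa only [greedySumK_singleton_add_smul B hij t] using
    hG _ _ (isGreedySetK_singleton_add_smul B hij ht)

theorem basis_orthogonal_of_Cw_one {𝕜 : Type*} [RCLike 𝕜] {H : Type*}
    [NormedAddCommGroup H] [InnerProductSpace 𝕜 H] [CompleteSpace H]
    (B : SchauderBasisK 𝕜 H) (hsn : SemiNormalizedK B)
    (hG : ∀ (x : H) (Λ : Finset ℕ), IsGreedySetK B x Λ → ‖greedySumK B x Λ‖ ≤ ‖x‖) :
    ∀ i j, i ≠ j → (inner 𝕜 (B.e i) (B.e j) : 𝕜) = 0 :=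
  basis_orthogonal_of_Cw_one_general B hG
end
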